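/- arXiv:0810.1354 — 5 statements merged into one kernel-verified Lean document; each statement's English description precedes it below -/
import Mathlib

section
/- For every n ≥ 1, γ − (∑_{k=1}^n 1/k − ln(n+1)) lies between 1/(2(n+1)) and 1/(n+1); in particular the partial sums approximate γ with error at most 1/(n+1) and at least 1/(2(n+1)). -/
/-!
Write `γₙ = Hₙ - log (n + 1)`. The increment `γₖ₊₁ - γₖ = 1/(k+1) - log ((k+2)/(k+1))` is at least
`1/(2(k+1)) - 1/(2(k+2))` by `log x ≤ (x - 1/x)/2` for `x ≥ 1` (that is, `t ≤ sinh t` for `t ≥ 0`),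
so `γₙ + 1/(2(n+1))` increases to `γ`. On the other side, `γₙ + 1/(n+1) = Hₙ₊₁ - log (n + 1)`
decreases to `γ`.
-/

open Filter

namespace Real

lemma log_le_sub_inv_div_two {x : ℝ} (hx : 1 ≤ x) : log x ≤ (x - x⁻¹) / 2 := by
  rw [← sinh_log (by linarith)]
  exact self_le_sinh_iff.2 (log_nonneg hx)

lemma eulerMascheroniSeq_succ_sub (k : ℕ) :
    eulerMascheroniSeq (k + 1) - eulerMascheroniSeq k =
      (k + 1 : ℝ)⁻¹ - log ((k + 2) / (k + 1)) := by
  simp only [eulerMascheroniSeq, harmonic_succ]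
  push_cast
  rw [log_div (by positivity) (by positivity), add_assoc, one_add_one_eq_two]
  ring

lemma monotone_eulerMascheroniSeq_add_inv_two_mul :
    Monotone fun k : ℕ ↦ eulerMascheroniSeq k + (2 * (k + 1 : ℝ))⁻¹ := by
  refine monotone_nat_of_le_succ fun k ↦ ?_
  have hk : (1 : ℝ) ≤ (k + 2) / (k + 1) := by
    rw [le_div_iff₀ (by positivity)]
    linarith
  have hlog := log_le_sub_inv_div_two hk
  have hstep := eulerMascheroniSeq_succ_sub k
  have hrhs : ((k + 2 : ℝ) / (k + 1) - ((k + 2 : ℝ) / (k + 1))⁻¹) / 2 =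
      (k + 1 : ℝ)⁻¹ - (2 * (k + 1 : ℝ))⁻¹ + (2 * (k + 2 : ℝ))⁻¹ := by
    rw [inv_div]
    field_simp
    ring
  push_cast
  rw [show (k : ℝ) + 1 + 1 = k + 2 by ring]
  linarith

lemma eulerMascheroniSeq_add_inv_two_mul_le (n : ℕ) :
    eulerMascheroniSeq n + (2 * (n + 1 : ℝ))⁻¹ ≤ eulerMascheroniConstant := by
  have hinv : Tendsto (fun k : ℕ ↦ (2 * (k + 1 : ℝ))⁻¹) atTop (nhds 0) := by
    simpa [mul_inv, mul_comm] using
      (tendsto_one_div_add_atTop_nhds_zero_nat.const_mul (2⁻¹ : ℝ))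
  exact monotone_eulerMascheroniSeq_add_inv_two_mul.ge_of_tendsto
    (by simpa using tendsto_eulerMascheroniSeq.add hinv) n

lemma eulerMascheroniConstant_lt_eulerMascheroniSeq_add_inv (n : ℕ) :
    eulerMascheroniConstant < eulerMascheroniSeq n + (n + 1 : ℝ)⁻¹ := by
  have h := eulerMascheroniConstant_lt_eulerMascheroniSeq' (n + 1)
  rw [eulerMascheroniSeq', if_neg n.succ_ne_zero, harmonic_succ] at h
  push_cast at h
  rw [eulerMascheroniSeq]
  linarith

lemma eulerMascheroniSeq_eq_sum_Icc (n : ℕ) :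
    eulerMascheroniSeq n = ∑ k ∈ Finset.Icc 1 n, (1 : ℝ) / k - log (n + 1) := by
  simp [eulerMascheroniSeq, harmonic_eq_sum_Icc]

end Real

theorem gamma_sub_partial_bounds_general (n : ℕ) :
    1 / (2 * (n + 1 : ℝ)) ≤
      Real.eulerMascheroniConstant - ((∑ k ∈ Finset.Icc 1 n, (1 : ℝ) / k) - Real.log (n + 1)) ∧
    Real.eulerMascheroniConstant - ((∑ k ∈ Finset.Icc 1 n, (1 : ℝ) / k) - Real.log (n + 1)) ≤
      1 / (n + 1 : ℝ) := by
  rw [← Real.eulerMascheroniSeq_eq_sum_Icc, one_div, one_div]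
  constructor
  · linarith [Real.eulerMascheroniSeq_add_inv_two_mul_le n]
  · linarith [Real.eulerMascheroniConstant_lt_eulerMascheroniSeq_add_inv n]

theorem gamma_sub_partial_bounds (n : ℕ) (hn : 1 ≤ n) :
    1 / (2 * (n + 1 : ℝ)) ≤
      Real.eulerMascheroniConstant - ((∑ k ∈ Finset.Icc 1 n, (1 : ℝ) / k) - Real.log (n + 1)) ∧
    Real.eulerMascheroniConstant - ((∑ k ∈ Finset.Icc 1 n, (1 : ℝ) / k) - Real.log (n + 1)) ≤
      1 / (n + 1 : ℝ) :=
  gamma_sub_partial_bounds_general n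
end

section
/- With b_n = ∑_{k=1}^{n-1} 1/k − ∑_{k=n+1}^{n²} 1/k, the quantity n²·(γ − b_n) converges to 2/3 as n → ∞. -/
/-!
Write `H n = log n + γ + 1/(2n) - 1/(12n²) + E n`. The increments of `E` are `O(n⁻⁴)`, because
the correction terms reproduce the Taylor expansion of `log (1 + 1/n)` up to third order; since
`E n → 0`, summing the increments from `n` to infinity gives `E n = O(n⁻³)`.
Now `b n = H (n - 1) - H (n²) + H n`, so the logarithms, the constants `γ` and the `1/n` terms
cancel in `γ - b n`, leaving `n² (γ - b n) = 2/3 - 1/(12n²) + n² E (n²) - 2 n² E n`.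
-/

open Filter Real Finset Topology

theorem dist_le_of_dist_succ_le_sub_of_tendsto {α : Type*} [PseudoMetricSpace α]
    {u : ℕ → α} {d : ℕ → ℝ} {a : α} {n : ℕ} (hu : Tendsto u atTop (𝓝 a))
    (hd : Tendsto d atTop (𝓝 0))
    (hstep : ∀ m ≥ n, dist (u m) (u (m + 1)) ≤ d m - d (m + 1)) :
    dist (u n) a ≤ d n := by
  have htele : ∀ m ≥ n, dist (u n) (u m) ≤ d n - d m := by
    intro m hm
    induction m, hm using Nat.le_induction with
    | base => simp
    | succ m hm ih =>
      calc dist (u n) (u (m + 1)) ≤ dist (u n) (u m) + dist (u m) (u (m + 1)) :=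
            dist_triangle _ _ _
        _ ≤ d n - d (m + 1) := by linarith [hstep m hm]
  refine le_of_tendsto_of_tendsto (tendsto_const_nhds.dist hu) ?_
    (eventually_atTop.2 ⟨n, htele⟩)
  simpa using tendsto_const_nhds.sub hd

theorem Real.abs_log_one_add_sub_le {t : ℝ} (ht : |t| ≤ 1 / 2) :
    |log (1 + t) - (t - t ^ 2 / 2 + t ^ 3 / 3)| ≤ 2 * |t| ^ 4 := by
  calc |log (1 + t) - (t - t ^ 2 / 2 + t ^ 3 / 3)|
      = |(∑ i ∈ range 3, (-t) ^ (i + 1) / (i + 1)) + log (1 - -t)| := by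
        congr 1; simp only [Finset.sum_range_succ, Finset.sum_range_zero]; push_cast; ring_nf
    _ ≤ |-t| ^ 4 / (1 - |-t|) :=
        abs_log_sub_add_sum_range_le (by rw [abs_neg]; linarith) 3
    _ ≤ 2 * |t| ^ 4 := by
        rw [abs_neg, div_le_iff₀ (by linarith)]
        have hhalf : (0 : ℝ) ≤ 1 / 2 - |t| := by linarith
        nlinarith [mul_nonneg (pow_nonneg (abs_nonneg t) 4) hhalf]

noncomputable def harmonicError (n : ℕ) : ℝ :=
  harmonic n - log n - eulerMascheroniConstant - 1 / (2 * n) + 1 / (12 * n ^ 2)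

theorem tendsto_harmonicError : Tendsto harmonicError atTop (𝓝 0) := by
  have hinv : Tendsto (fun n : ℕ => (n : ℝ)⁻¹) atTop (𝓝 0) :=
    tendsto_inv_atTop_zero.comp tendsto_natCast_atTop_atTop
  have h := ((tendsto_harmonic_sub_log.sub_const eulerMascheroniConstant).sub
    (hinv.const_mul (1 / 2))).add ((hinv.pow 2).const_mul (1 / 12))
  rw [sub_self, mul_zero, zero_sub, neg_zero, zero_pow two_ne_zero, mul_zero, add_zero] at h
  refine h.congr fun n => ?_
  simp only [harmonicError, one_div, mul_inv, inv_pow]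

theorem abs_harmonicError_succ_sub_le {n : ℕ} (hn : 2 ≤ n) :
    |harmonicError (n + 1) - harmonicError n| ≤ 3 / (n : ℝ) ^ 4 := by
  set x : ℝ := (n : ℝ) with hx_def
  have hx : (2 : ℝ) ≤ x := by rw [hx_def]; exact_mod_cast hn
  have hx0 : 0 < x := by linarith
  have hlog : log (x + 1) = log x + log (1 + x⁻¹) := by
    rw [← log_mul hx0.ne' (by positivity), mul_add, mul_inv_cancel₀ hx0.ne', mul_one]
  -- the rational term is the exact remainder of the correction terms against the Taylor
  -- polynomial of `log (1 + x⁻¹)`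
  have hdiff : harmonicError (n + 1) - harmonicError n =
      -(log (1 + x⁻¹) - (x⁻¹ - x⁻¹ ^ 2 / 2 + x⁻¹ ^ 3 / 3))
        - (3 * x + 4) / (12 * x ^ 3 * (x + 1) ^ 2) := by
    simp only [harmonicError, harmonic_succ]
    push_cast
    rw [← hx_def, hlog]
    field_simp
    ring
  have hlog_le : |log (1 + x⁻¹) - (x⁻¹ - x⁻¹ ^ 2 / 2 + x⁻¹ ^ 3 / 3)| ≤ 2 / x ^ 4 := by
    refine (abs_log_one_add_sub_le ?_).trans_eq ?_ <;> rw [abs_of_pos (inv_pos.2 hx0)]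
    · rw [one_div]; exact inv_anti₀ two_pos hx
    · field_simp
  have hrat_le : |(3 * x + 4) / (12 * x ^ 3 * (x + 1) ^ 2)| ≤ 1 / x ^ 4 := by
    rw [abs_of_pos (by positivity), div_le_div_iff₀ (by positivity) (by positivity)]
    nlinarith [pow_pos hx0 3]
  rw [hdiff]
  calc _ ≤ |log (1 + x⁻¹) - (x⁻¹ - x⁻¹ ^ 2 / 2 + x⁻¹ ^ 3 / 3)|
        + |(3 * x + 4) / (12 * x ^ 3 * (x + 1) ^ 2)| := (abs_sub _ _).trans_eq (by rw [abs_neg])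
    _ ≤ 2 / x ^ 4 + 1 / x ^ 4 := add_le_add hlog_le hrat_le
    _ = 3 / x ^ 4 := by ring

theorem abs_harmonicError_le {n : ℕ} (hn : 2 ≤ n) :
    |harmonicError n| ≤ 8 / (n : ℝ) ^ 3 := by
  have hd : Tendsto (fun m : ℕ => 8 / (m : ℝ) ^ 3) atTop (𝓝 0) :=
    tendsto_const_nhds.div_atTop
      ((tendsto_pow_atTop three_ne_zero).comp tendsto_natCast_atTop_atTop)
  have hstep : ∀ m ≥ n, dist (harmonicError m) (harmonicError (m + 1)) ≤
      8 / (m : ℝ) ^ 3 - 8 / ((m + 1 : ℕ) : ℝ) ^ 3 := by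
    intro m hm
    -- `(m + 1)³ ≤ 8m³` gives `8 (m⁻³ - (m + 1)⁻³) ≥ 3 m⁻⁴`
    have hm1 : (1 : ℝ) ≤ m := by exact_mod_cast (by omega : 1 ≤ m)
    rw [dist_comm, dist_eq_norm, Real.norm_eq_abs]
    refine (abs_harmonicError_succ_sub_le (hn.trans hm)).trans ?_
    push_cast
    rw [div_sub_div _ _ (by positivity) (by positivity),
      div_le_div_iff₀ (by positivity) (by positivity)]
    have hm0 : (0 : ℝ) < m := by linarith
    nlinarith [pow_pos hm0 3, pow_pos hm0 4, pow_pos hm0 5, pow_pos hm0 6]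
  simpa [dist_eq_norm] using dist_le_of_dist_succ_le_sub_of_tendsto tendsto_harmonicError hd hstep

theorem tendsto_pow_mul_harmonicError {k : ℕ} (hk : k ≤ 2) :
    Tendsto (fun n : ℕ => (n : ℝ) ^ k * harmonicError n) atTop (𝓝 0) := by
  refine squeeze_zero_norm' ?_ (tendsto_const_div_atTop_nhds_zero_nat 8)
  filter_upwards [eventually_ge_atTop 2] with n hn
  have hn1 : (1 : ℝ) ≤ n := by exact_mod_cast (by omega : 1 ≤ n)
  rw [norm_mul, norm_pow, Real.norm_natCast, Real.norm_eq_abs]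
  calc (n : ℝ) ^ k * |harmonicError n| ≤ (n : ℝ) ^ 2 * (8 / (n : ℝ) ^ 3) :=
        mul_le_mul (pow_le_pow_right₀ hn1 hk) (abs_harmonicError_le hn) (abs_nonneg _)
          (by positivity)
    _ = 8 / n := by field_simp

theorem sum_Icc_succ_one_div_eq_harmonic_sub {m n : ℕ} (h : m ≤ n) :
    ∑ k ∈ Icc (m + 1) n, (1 : ℝ) / k = harmonic n - harmonic m := by
  have hH (j : ℕ) : (harmonic j : ℝ) = ∑ k ∈ Ioc 0 j, (1 : ℝ) / k := by
    rw [harmonic_eq_sum_Icc, ← Icc_add_one_left_eq_Ioc]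
    push_cast
    simp only [one_div]
  rw [hH, hH, ← sum_Ioc_consecutive _ (Nat.zero_le m) h, Icc_add_one_left_eq_Ioc]
  ring

theorem sq_mul_eulerMascheroniConstant_sub_eq {n : ℕ} (hn : n ≠ 0) :
    (n : ℝ) ^ 2 * (eulerMascheroniConstant -
        ((∑ k ∈ Icc 1 (n - 1), (1 : ℝ) / k) - ∑ k ∈ Icc (n + 1) (n ^ 2), (1 : ℝ) / k)) =
      2 / 3 - 1 / (12 * (n : ℝ) ^ 2) + (n : ℝ) ^ 2 * harmonicError (n ^ 2)
        - 2 * ((n : ℝ) ^ 2 * harmonicError n) := by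
  obtain ⟨m, rfl⟩ := Nat.exists_eq_add_one_of_ne_zero hn
  have hlower := sum_Icc_succ_one_div_eq_harmonic_sub (Nat.zero_le m)
  rw [zero_add] at hlower
  rw [Nat.add_sub_cancel, hlower,
    sum_Icc_succ_one_div_eq_harmonic_sub (Nat.le_self_pow two_ne_zero _)]
  simp only [harmonicError, harmonic_succ, harmonic_zero]
  push_cast
  rw [log_pow]
  field_simp
  ring

theorem tendsto_sq_mul_gamma_sub_b :
    Tendsto (fun n : ℕ => (n : ℝ) ^ 2 *
        (Real.eulerMascheroniConstant -
          ((∑ k ∈ Finset.Icc 1 (n - 1), (1 : ℝ) / k) -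
            ∑ k ∈ Finset.Icc (n + 1) (n ^ 2), (1 : ℝ) / k)))
      atTop (nhds (2 / 3)) := by
  have hinv_sq : Tendsto (fun n : ℕ => 1 / (12 * (n : ℝ) ^ 2)) atTop (𝓝 0) :=
    tendsto_const_nhds.div_atTop (((tendsto_pow_atTop two_ne_zero).comp
      tendsto_natCast_atTop_atTop).const_mul_atTop (by norm_num))
  have hsq : Tendsto (fun n : ℕ => (n : ℝ) ^ 2 * harmonicError (n ^ 2)) atTop (𝓝 0) := by
    refine ((tendsto_pow_mul_harmonicError one_le_two).comp
      (tendsto_pow_atTop two_ne_zero)).congr fun n => ?_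
    simp
  have h := (((tendsto_const_nhds (x := (2 / 3 : ℝ))).sub hinv_sq).add hsq).sub
    ((tendsto_pow_mul_harmonicError le_rfl).const_mul 2)
  rw [sub_zero, add_zero, mul_zero, sub_zero] at h
  refine h.congr' ?_
  filter_upwards [eventually_ne_atTop 0] with n hn
  exact (sq_mul_eulerMascheroniConstant_sub_eq hn).symm
end

section
/- Define Z(q) as the number of divisors of q strictly less than q^{1/4} minus the number of divisors of q strictly between q^{1/4} and q^{1/2}. Then (1/B)∑_{q=1}^B Z(q) converges to γ as B → ∞. -/
/-!
Write `q = d * m`. Swapping the order of summation, `∑_{q ≤ B} Z q` counts, for each `d`, the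
cofactors `m ≤ B / d` with `d³ < m` minus those with `d < m < d³`. With `K = ⌊B^{1/4}⌋` and
`M = ⌊B^{1/2}⌋`, a `d ≤ K` contributes `⌊B/d⌋ - 2d³ + O(d)`, a `K < d ≤ M` contributes
`d - ⌊B/d⌋`, and larger `d` contribute nothing. Replacing `⌊B/d⌋` by `B/d` costs `O(M) = o(B)`, so
with harmonic numbers `H_n` the sum is `B (2 H_K - H_M) + M²/2 - K⁴/2 + o(B)`. Since
`2 H_K - H_M = γ + log (K² / M) + o(1)` and `K⁴ ~ M² ~ B`, the average tends to `γ`.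
-/

open Filter Finset Real Topology
open scoped Classical

lemma natCast_lt_rpow_one_div_iff {n : ℕ} (hn : n ≠ 0) (d q : ℕ) :
    (d : ℝ) < (q : ℝ) ^ ((1 : ℝ) / n) ↔ d ^ n < q := by
  rw [one_div, lt_rpow_inv_iff_of_pos (by positivity) (by positivity) (by positivity),
    rpow_natCast]
  exact_mod_cast Iff.rfl

lemma rpow_one_div_lt_natCast_iff {n : ℕ} (hn : n ≠ 0) (d q : ℕ) :
    (q : ℝ) ^ ((1 : ℝ) / n) < d ↔ q < d ^ n := by
  rw [one_div, rpow_inv_lt_iff_of_pos (by positivity) (by positivity) (by positivity),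
    rpow_natCast]
  exact_mod_cast Iff.rfl

noncomputable def divisorBalance (q : ℕ) : ℝ :=
  ((q.divisors.filter fun (d : ℕ) => (d : ℝ) < (q : ℝ) ^ ((1 : ℝ) / 4)).card : ℝ) -
    ((q.divisors.filter fun (d : ℕ) =>
      (q : ℝ) ^ ((1 : ℝ) / 4) < (d : ℝ) ∧ (d : ℝ) < (q : ℝ) ^ ((1 : ℝ) / 2)).card : ℝ)

lemma divisorBalance_eq (q : ℕ) :
    divisorBalance q = (#{d ∈ q.divisors | d ^ 4 < q} : ℝ) -
      #{d ∈ q.divisors | q < d ^ 4 ∧ d ^ 2 < q} := by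
  have h4 := natCast_lt_rpow_one_div_iff (n := 4) (by norm_num)
  have h4' := rpow_one_div_lt_natCast_iff (n := 4) (by norm_num)
  have h2 := natCast_lt_rpow_one_div_iff (n := 2) (by norm_num)
  push_cast at h4 h4' h2
  simp only [divisorBalance, h4, h4', h2]

lemma divisors_filter_eq_Icc_filter {q B : ℕ} (hq : q ∈ Icc 1 B) (p : ℕ → Prop)
    [DecidablePred p] :
    {d ∈ q.divisors | p d} = {d ∈ Icc 1 B | d ∣ q ∧ p d} := by
  ext d
  simp only [mem_Icc] at hq
  simp only [mem_filter, Nat.mem_divisors, mem_Icc]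
  constructor
  · rintro ⟨⟨hdq, -⟩, hp⟩
    exact ⟨⟨Nat.pos_of_dvd_of_pos hdq hq.1, (Nat.le_of_dvd hq.1 hdq).trans hq.2⟩, hdq, hp⟩
  · rintro ⟨-, hdq, hp⟩
    exact ⟨⟨hdq, by omega⟩, hp⟩

lemma Icc_filter_dvd_eq_image {d B : ℕ} (hd : 0 < d) (p : ℕ → Prop) [DecidablePred p] :
    {q ∈ Icc 1 B | d ∣ q ∧ p q} = {m ∈ Icc 1 (B / d) | p (d * m)}.image (d * ·) := by
  ext q
  simp only [mem_filter, mem_image, mem_Icc]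
  constructor
  · rintro ⟨⟨hq, hqB⟩, ⟨m, rfl⟩, hp⟩
    refine ⟨m, ⟨⟨Nat.pos_of_mul_pos_left hq, ?_⟩, hp⟩, rfl⟩
    exact (Nat.le_div_iff_mul_le hd).2 (by linarith [mul_comm d m])
  · rintro ⟨m, ⟨⟨hm, hmB⟩, hp⟩, rfl⟩
    refine ⟨⟨Nat.mul_pos hd hm, ?_⟩, dvd_mul_right d m, hp⟩
    exact (Nat.mul_le_mul_left d hmB).trans (Nat.mul_div_le B d)

theorem sum_card_divisors_filter (B : ℕ) (p : ℕ → ℕ → Prop) [∀ d q, Decidable (p d q)] :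
    ∑ q ∈ Icc 1 B, #{d ∈ q.divisors | p d q} =
      ∑ d ∈ Icc 1 B, #{m ∈ Icc 1 (B / d) | p d (d * m)} := by
  calc ∑ q ∈ Icc 1 B, #{d ∈ q.divisors | p d q}
      = ∑ q ∈ Icc 1 B, #((Icc 1 B).bipartiteAbove (fun q d => d ∣ q ∧ p d q) q) :=
        sum_congr rfl fun q hq => by
          rw [bipartiteAbove, divisors_filter_eq_Icc_filter hq]
    _ = ∑ d ∈ Icc 1 B, #((Icc 1 B).bipartiteBelow (fun q d => d ∣ q ∧ p d q) d) :=
        sum_card_bipartiteAbove_eq_sum_card_bipartiteBelow _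
    _ = ∑ d ∈ Icc 1 B, #{m ∈ Icc 1 (B / d) | p d (d * m)} :=
        sum_congr rfl fun d hd => by
          have hd0 : 0 < d := (mem_Icc.1 hd).1
          rw [bipartiteBelow, Icc_filter_dvd_eq_image hd0,
            card_image_of_injective _ (mul_right_injective₀ hd0.ne')]

lemma card_Icc_one_filter_lt (a N : ℕ) : #{m ∈ Icc 1 N | a < m} = N - a := by
  rw [← Nat.card_Ioc]
  congr 1
  ext m
  simp only [mem_filter, mem_Icc, mem_Ioc]
  omega

lemma card_Icc_one_filter_lt_lt (a b N : ℕ) :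
    #{m ∈ Icc 1 N | a < m ∧ m < b} = min (N + 1) b - a - 1 := by
  rw [← Nat.card_Ioo]
  congr 1
  ext m
  simp only [mem_filter, mem_Icc, mem_Ioo, lt_min_iff]
  omega

/-- The contribution of the divisor `d` to `∑ q ∈ Icc 1 B, divisorBalance q`, counted by the
cofactor `m = q / d`. -/
noncomputable def multipleBalance (B d : ℕ) : ℝ :=
  (#{m ∈ Icc 1 (B / d) | d ^ 3 < m} : ℝ) - #{m ∈ Icc 1 (B / d) | d < m ∧ m < d ^ 3}

lemma sum_divisorBalance_eq_sum_multipleBalance (B : ℕ) :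
    ∑ q ∈ Icc 1 B, divisorBalance q = ∑ d ∈ Icc 1 B, multipleBalance B d := by
  have hcount (p : ℕ → ℕ → Prop) [∀ d q, Decidable (p d q)] :
      ∑ q ∈ Icc 1 B, (#{d ∈ q.divisors | p d q} : ℝ) =
        ∑ d ∈ Icc 1 B, (#{m ∈ Icc 1 (B / d) | p d (d * m)} : ℝ) := by
    exact_mod_cast sum_card_divisors_filter B p
  simp only [divisorBalance_eq, multipleBalance, sum_sub_distrib, hcount]
  congr 1 <;> refine sum_congr rfl fun d hd => ?_ <;> congr 2 <;>
    refine filter_congr fun m _ => ?_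
  all_goals have hd0 : 0 < d := (mem_Icc.1 hd).1
  · rw [pow_succ', Nat.mul_lt_mul_left hd0]
  · rw [pow_succ' d 3, sq, Nat.mul_lt_mul_left hd0, Nat.mul_lt_mul_left hd0, and_comm]

lemma multipleBalance_of_pow_four_le {B d : ℕ} (hd : 0 < d) (h : d ^ 4 ≤ B) :
    multipleBalance B d = (B / d : ℕ) - d ^ 3 - ((d ^ 3 - d - 1 : ℕ) : ℝ) := by
  have hle : d ^ 3 ≤ B / d := (Nat.le_div_iff_mul_le hd).2 (by linarith [pow_succ d 3])
  rw [multipleBalance, card_Icc_one_filter_lt, card_Icc_one_filter_lt_lt,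
    min_eq_right (by omega), Nat.cast_sub hle]
  push_cast; ring

lemma multipleBalance_of_lt_pow_four {B d : ℕ} (hd : 0 < d) (h4 : B < d ^ 4)
    (h2 : d ^ 2 ≤ B) :
    multipleBalance B d = d - (B / d : ℕ) := by
  have hlt : B / d < d ^ 3 := (Nat.div_lt_iff_lt_mul hd).2 (by linarith [pow_succ d 3])
  have hle : d ≤ B / d := (Nat.le_div_iff_mul_le hd).2 (by linarith [sq d])
  rw [multipleBalance, card_Icc_one_filter_lt, card_Icc_one_filter_lt_lt,
    min_eq_left (by omega), Nat.sub_eq_zero_of_le hlt.le,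
    show B / d + 1 - d - 1 = B / d - d by omega, Nat.cast_sub hle]
  push_cast; ring

lemma multipleBalance_of_lt_sq {B d : ℕ} (hd : 0 < d) (h : B < d ^ 2) :
    multipleBalance B d = 0 := by
  have hlt : B / d < d := (Nat.div_lt_iff_lt_mul hd).2 (by linarith [sq d])
  have hd3 : d ≤ d ^ 3 := Nat.le_self_pow (by norm_num) d
  rw [multipleBalance, card_Icc_one_filter_lt, card_Icc_one_filter_lt_lt,
    Nat.sub_eq_zero_of_le (by omega), show min (B / d + 1) (d ^ 3) - d - 1 = 0 by omega]
  simp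

lemma sum_Ioc_natCast (n : ℕ) : ∑ d ∈ Ioc 0 n, (d : ℝ) = n * (n + 1) / 2 := by
  induction n with
  | zero => simp
  | succ n ih =>
    rw [sum_Ioc_succ_top (Nat.zero_le _), ih]
    push_cast; ring

lemma sum_Ioc_natCast_pow_three (n : ℕ) :
    ∑ d ∈ Ioc 0 n, (d : ℝ) ^ 3 = (n * (n + 1) / 2) ^ 2 := by
  induction n with
  | zero => simp
  | succ n ih =>
    rw [sum_Ioc_succ_top (Nat.zero_le _), ih]
    push_cast; ring

/-- The `d = 1` term is `0` by truncated subtraction, hence the `+ 1`. -/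
lemma sum_Ioc_pow_three_sub_sub_one {n : ℕ} (hn : 1 ≤ n) :
    ∑ d ∈ Ioc 0 n, ((d ^ 3 - d - 1 : ℕ) : ℝ) =
      (n * (n + 1) / 2) ^ 2 - n * (n + 1) / 2 - n + 1 := by
  induction n, hn using Nat.le_induction with
  | base => simp
  | succ n hn ih =>
    have hsub : n + 1 + 1 ≤ (n + 1) ^ 3 := by
      nlinarith [Nat.pow_le_pow_left (show 2 ≤ n + 1 by omega) 2, pow_succ (n + 1) 2]
    rw [sum_Ioc_succ_top (Nat.zero_le _), ih, Nat.sub_sub, Nat.cast_sub hsub]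
    push_cast; ring

theorem sum_divisorBalance_eq {B : ℕ} (hB : 1 ≤ B) :
    ∑ q ∈ Icc 1 B, divisorBalance q =
      ∑ d ∈ Ioc 0 (Nat.sqrt (Nat.sqrt B)), ((B / d : ℕ) : ℝ) -
        ∑ d ∈ Ioc (Nat.sqrt (Nat.sqrt B)) (Nat.sqrt B), ((B / d : ℕ) : ℝ) +
      ((Nat.sqrt B : ℝ) * (Nat.sqrt B + 1) / 2 -
        2 * ((Nat.sqrt (Nat.sqrt B) : ℝ) * (Nat.sqrt (Nat.sqrt B) + 1) / 2) ^ 2 +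
        Nat.sqrt (Nat.sqrt B) - 1) := by
  set M := Nat.sqrt B
  set K := Nat.sqrt M
  have hKM : K ≤ M := Nat.sqrt_le_self M
  have hK : 1 ≤ K := Nat.le_sqrt.2 (Nat.le_sqrt.2 hB)
  have hsmall : ∑ d ∈ Ioc 0 K, multipleBalance B d =
      ∑ d ∈ Ioc 0 K, ((B / d : ℕ) : ℝ) - ∑ d ∈ Ioc 0 K, (d : ℝ) ^ 3 -
        ∑ d ∈ Ioc 0 K, ((d ^ 3 - d - 1 : ℕ) : ℝ) := by
    rw [← sum_sub_distrib, ← sum_sub_distrib]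
    refine sum_congr rfl fun d hd => multipleBalance_of_pow_four_le (mem_Ioc.1 hd).1 ?_
    have := Nat.le_sqrt.1 (Nat.le_sqrt.1 (mem_Ioc.1 hd).2)
    linarith [show d ^ 4 = d * d * (d * d) by ring]
  have hmiddle : ∑ d ∈ Ioc K M, multipleBalance B d =
      ∑ d ∈ Ioc K M, (d : ℝ) - ∑ d ∈ Ioc K M, ((B / d : ℕ) : ℝ) := by
    rw [← sum_sub_distrib]
    refine sum_congr rfl fun d hd => ?_
    obtain ⟨hKd, hdM⟩ := mem_Ioc.1 hd
    refine multipleBalance_of_lt_pow_four (by omega) ?_ (by linarith [Nat.le_sqrt.1 hdM, sq d])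
    linarith [Nat.sqrt_lt.1 (Nat.sqrt_lt.1 hKd), show d ^ 4 = d * d * (d * d) by ring]
  have hlarge : ∑ d ∈ Ioc M B, multipleBalance B d = 0 :=
    sum_eq_zero fun d hd => multipleBalance_of_lt_sq (Nat.zero_lt_of_lt (mem_Ioc.1 hd).1)
      (by linarith [Nat.sqrt_lt.1 (mem_Ioc.1 hd).1, sq d])
  have hid : ∑ d ∈ Ioc K M, (d : ℝ) = M * (M + 1) / 2 - K * (K + 1) / 2 := by
    rw [← sum_Ioc_natCast, ← sum_Ioc_natCast, ← sum_Ioc_consecutive _ (Nat.zero_le K) hKM]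
    ring
  rw [sum_divisorBalance_eq_sum_multipleBalance,
    show Icc 1 B = Ioc 0 B from Icc_add_one_left_eq_Ioc 0 B,
    ← sum_Ioc_consecutive _ (Nat.zero_le M) (Nat.sqrt_le_self B),
    ← sum_Ioc_consecutive _ (Nat.zero_le K) hKM, hsmall, hmiddle, hlarge, hid,
    sum_Ioc_natCast_pow_three, sum_Ioc_pow_three_sub_sub_one hK]
  ring

lemma tendsto_nat_sqrt_atTop : Tendsto Nat.sqrt atTop atTop :=
  tendsto_atTop_atTop_of_monotone (fun _ _ => Nat.sqrt_le_sqrt) fun b =>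
    ⟨b * b, (Nat.sqrt_eq b).ge⟩

lemma tendsto_natCast_inv_of_tendsto_atTop {f : ℕ → ℕ} (hf : Tendsto f atTop atTop) :
    Tendsto (fun n => ((f n : ℕ) : ℝ)⁻¹) atTop (𝓝 0) :=
  tendsto_inv_atTop_zero.comp (tendsto_natCast_atTop_atTop.comp hf)

lemma tendsto_nat_sqrt_sq_div : Tendsto (fun n : ℕ => (Nat.sqrt n : ℝ) ^ 2 / n) atTop (𝓝 1) := by
  have hratio : Tendsto (fun n : ℕ => ((Nat.sqrt n : ℝ) / (Nat.sqrt n + 1)) ^ 2) atTop (𝓝 1) := by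
    simpa using ((tendsto_natCast_div_add_atTop (1 : ℝ)).comp tendsto_nat_sqrt_atTop).pow 2
  refine tendsto_of_tendsto_of_tendsto_of_le_of_le' hratio tendsto_const_nhds ?_ ?_
  all_goals filter_upwards [eventually_ge_atTop 1] with n hn
  all_goals have hn0 : (0 : ℝ) < n := by exact_mod_cast hn
  · have hlt : (n : ℝ) < (Nat.sqrt n + 1) ^ 2 := by exact_mod_cast Nat.lt_succ_sqrt' n
    rw [div_pow, div_le_div_iff₀ (by positivity) hn0]
    exact mul_le_mul_of_nonneg_left hlt.le (by positivity)
  · rw [div_le_one hn0]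
    exact_mod_cast Nat.sqrt_le' n

lemma tendsto_nat_sqrt_sqrt_pow_four_div :
    Tendsto (fun n : ℕ => (Nat.sqrt (Nat.sqrt n) : ℝ) ^ 4 / n) atTop (𝓝 1) := by
  have h :=
    ((tendsto_nat_sqrt_sq_div.comp tendsto_nat_sqrt_atTop).pow 2).mul tendsto_nat_sqrt_sq_div
  rw [one_pow, one_mul] at h
  refine h.congr' ?_
  filter_upwards [eventually_ge_atTop 1] with n hn
  have hM : (Nat.sqrt n : ℝ) ≠ 0 := by exact_mod_cast (Nat.sqrt_pos.2 hn).ne'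
  simp only [Function.comp_apply]
  field_simp

lemma sum_Ioc_inv_eq_harmonic_sub {a b : ℕ} (hab : a ≤ b) :
    ∑ d ∈ Ioc a b, (d : ℝ)⁻¹ = harmonic b - harmonic a := by
  have h (n : ℕ) : ∑ d ∈ Ioc 0 n, (d : ℝ)⁻¹ = harmonic n := by
    rw [harmonic_eq_sum_Icc, ← Icc_add_one_left_eq_Ioc]
    push_cast; rfl
  rw [← h, ← h, ← sum_Ioc_consecutive _ (Nat.zero_le a) hab]
  ring

lemma abs_sum_natDiv_sub_le (B : ℕ) (s : Finset ℕ) :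
    |∑ d ∈ s, ((B / d : ℕ) : ℝ) - B * ∑ d ∈ s, (d : ℝ)⁻¹| ≤ #s := by
  rw [mul_sum, ← sum_sub_distrib]
  calc |∑ d ∈ s, (((B / d : ℕ) : ℝ) - B * (d : ℝ)⁻¹)|
      ≤ ∑ d ∈ s, |((B / d : ℕ) : ℝ) - B * (d : ℝ)⁻¹| := abs_sum_le_sum_abs _ _
    _ ≤ ∑ _d ∈ s, (1 : ℝ) := sum_le_sum fun d _ => by
        rw [← div_eq_mul_inv, ← Nat.floor_div_eq_div (K := ℝ), abs_le]
        have hx : (0 : ℝ) ≤ B / d := by positivity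
        constructor <;> linarith [Nat.floor_le hx, Nat.lt_floor_add_one ((B : ℝ) / d)]
    _ = #s := by simp

lemma tendsto_two_mul_harmonic_sub_harmonic :
    Tendsto (fun B : ℕ => 2 * (harmonic (Nat.sqrt (Nat.sqrt B)) : ℝ) - harmonic (Nat.sqrt B))
      atTop (𝓝 eulerMascheroniConstant) := by
  have hM := tendsto_harmonic_sub_log.comp tendsto_nat_sqrt_atTop
  have hK := tendsto_harmonic_sub_log.comp (tendsto_nat_sqrt_atTop.comp tendsto_nat_sqrt_atTop)
  have hlog := (tendsto_nat_sqrt_sq_div.comp tendsto_nat_sqrt_atTop).log one_ne_zero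
  have h := ((hK.const_mul 2).sub hM).add hlog
  rw [log_one, add_zero, two_mul, add_sub_cancel_right] at h
  refine h.congr' ?_
  filter_upwards [eventually_ge_atTop 1] with B hB
  have hM0 : (Nat.sqrt B : ℝ) ≠ 0 := by exact_mod_cast (Nat.sqrt_pos.2 hB).ne'
  have hK0 : (Nat.sqrt (Nat.sqrt B) : ℝ) ≠ 0 := by
    exact_mod_cast (Nat.sqrt_pos.2 (Nat.sqrt_pos.2 hB)).ne'
  simp only [Function.comp_apply]
  rw [log_div (pow_ne_zero 2 hK0) hM0, log_pow]
  push_cast; ring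

lemma tendsto_sum_natDiv_div_sub_harmonic :
    Tendsto (fun B : ℕ => (∑ d ∈ Ioc 0 (Nat.sqrt (Nat.sqrt B)), ((B / d : ℕ) : ℝ) -
        ∑ d ∈ Ioc (Nat.sqrt (Nat.sqrt B)) (Nat.sqrt B), ((B / d : ℕ) : ℝ)) / B -
        (2 * (harmonic (Nat.sqrt (Nat.sqrt B)) : ℝ) - harmonic (Nat.sqrt B))) atTop (𝓝 0) := by
  have hMB : Tendsto (fun B : ℕ => (Nat.sqrt B : ℝ) / B) atTop (𝓝 0) := by
    have h := tendsto_nat_sqrt_sq_div.mul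
      (tendsto_natCast_inv_of_tendsto_atTop tendsto_nat_sqrt_atTop)
    rw [one_mul] at h
    refine h.congr' ?_
    filter_upwards [eventually_ge_atTop 1] with B hB
    have hM0 : (Nat.sqrt B : ℝ) ≠ 0 := by exact_mod_cast (Nat.sqrt_pos.2 hB).ne'
    field_simp
  refine squeeze_zero_norm' ?_ hMB
  filter_upwards [eventually_ge_atTop 1] with B hB
  set M := Nat.sqrt B
  set K := Nat.sqrt M
  have hKM : K ≤ M := Nat.sqrt_le_self M
  have hB0 : (0 : ℝ) < B := by exact_mod_cast hB
  have hsmall := abs_sum_natDiv_sub_le B (Ioc 0 K)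
  have hmiddle := abs_sum_natDiv_sub_le B (Ioc K M)
  rw [sum_Ioc_inv_eq_harmonic_sub (Nat.zero_le K), Nat.card_Ioc, Nat.sub_zero] at hsmall
  rw [sum_Ioc_inv_eq_harmonic_sub hKM, Nat.card_Ioc, Nat.cast_sub hKM] at hmiddle
  rw [Real.norm_eq_abs, le_div_iff₀ hB0, ← abs_of_pos hB0, ← abs_mul, abs_of_pos hB0]
  calc _ = |(∑ d ∈ Ioc 0 K, ((B / d : ℕ) : ℝ) - B * (harmonic K - harmonic 0 : ℝ)) -
        (∑ d ∈ Ioc K M, ((B / d : ℕ) : ℝ) - B * (harmonic M - harmonic K : ℝ))| := by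
          congr 1; field_simp; push_cast [harmonic_zero]; ring
    _ ≤ _ := (abs_sub _ _).trans (by linarith)

lemma tendsto_remainder_div :
    Tendsto (fun B : ℕ => ((Nat.sqrt B : ℝ) * (Nat.sqrt B + 1) / 2 -
        2 * ((Nat.sqrt (Nat.sqrt B) : ℝ) * (Nat.sqrt (Nat.sqrt B) + 1) / 2) ^ 2 +
        Nat.sqrt (Nat.sqrt B) - 1) / B) atTop (𝓝 0) := by
  have hMinv := tendsto_natCast_inv_of_tendsto_atTop tendsto_nat_sqrt_atTop
  have hKinv :=
    tendsto_natCast_inv_of_tendsto_atTop (tendsto_nat_sqrt_atTop.comp tendsto_nat_sqrt_atTop)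
  have hM := (tendsto_nat_sqrt_sq_div.mul (hMinv.const_add 1)).div_const 2
  have hK := (tendsto_nat_sqrt_sqrt_pow_four_div.mul ((hKinv.const_add 1).pow 2)).div_const 2
  have hK3 := tendsto_nat_sqrt_sqrt_pow_four_div.mul (hKinv.pow 3)
  have h := ((hM.sub hK).add hK3).sub (tendsto_natCast_inv_of_tendsto_atTop tendsto_id)
  norm_num at h
  refine h.congr' ?_
  filter_upwards [eventually_ge_atTop 1] with B hB
  have hM0 : (Nat.sqrt B : ℝ) ≠ 0 := by exact_mod_cast (Nat.sqrt_pos.2 hB).ne'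
  have hK0 : (Nat.sqrt (Nat.sqrt B) : ℝ) ≠ 0 := by
    exact_mod_cast (Nat.sqrt_pos.2 (Nat.sqrt_pos.2 hB)).ne'
  have hB0 : (B : ℝ) ≠ 0 := by exact_mod_cast (show B ≠ 0 by omega)
  field_simp

theorem avg_fourth_root_divisor_count_tendsto_gamma :
    Tendsto (fun B : ℕ => (1 / (B : ℝ)) *
        ∑ q ∈ Finset.Icc 1 B,
          (((q.divisors.filter fun (d : ℕ) => (d : ℝ) < (q : ℝ) ^ ((1 : ℝ) / 4)).card : ℝ) -
           ((q.divisors.filter fun (d : ℕ) =>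
              (q : ℝ) ^ ((1 : ℝ) / 4) < (d : ℝ) ∧ (d : ℝ) < (q : ℝ) ^ ((1 : ℝ) / 2)).card : ℝ)))
      atTop (nhds Real.eulerMascheroniConstant) := by
  have h := (tendsto_sum_natDiv_div_sub_harmonic.add tendsto_two_mul_harmonic_sub_harmonic).add
    tendsto_remainder_div
  rw [zero_add, add_zero] at h
  refine h.congr' ?_
  filter_upwards [eventually_ge_atTop 1] with B hB
  change _ = 1 / (B : ℝ) * ∑ q ∈ Icc 1 B, divisorBalance q
  rw [sum_divisorBalance_eq hB]
  ring
end

section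
/- For each positive integer k, setting α_k = e^{γ − (1 + 1/2 + ⋯ + 1/k)}, one has α_k ∈ (0,1) and A(α_k) = γ, where A(α) = ∑_{i=1}^{⌈(1−α)/α⌉} 1/i − ln(1/α). In particular A takes the value γ for infinitely many α ∈ (0,1). -/
/-!
The bounds `log k < H_k - γ < log (k + 1)` of the Euler–Mascheroni sequences place
`α_k⁻¹ = exp (H_k - γ)` strictly between `k` and `k + 1`, so `⌈(1 - α_k) / α_k⌉ = ⌈α_k⁻¹⌉ - 1 = k`
and `A(α_k) = H_k + log α_k = γ`. Since the ceiling recovers `k` from `α_k`, the `α_k` are distinct.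
-/

open Real Finset

lemma sum_Icc_one_div_eq_harmonic (k : ℕ) : ∑ i ∈ Icc 1 k, (1 : ℝ) / i = harmonic k := by
  simp [harmonic_eq_sum_Icc, one_div]

lemma log_lt_harmonic_sub_eulerMascheroniConstant {k : ℕ} (hk : k ≠ 0) :
    log k < harmonic k - eulerMascheroniConstant := by
  have := eulerMascheroniConstant_lt_eulerMascheroniSeq' k
  rw [eulerMascheroniSeq', if_neg hk] at this
  linarith

lemma harmonic_sub_eulerMascheroniConstant_lt_log_succ (k : ℕ) :
    harmonic k - eulerMascheroniConstant < log (k + 1) := by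
  have := eulerMascheroniSeq_lt_eulerMascheroniConstant k
  rw [eulerMascheroniSeq] at this
  linarith

lemma exp_harmonic_sub_eulerMascheroniConstant_mem_Ioo {k : ℕ} (hk : k ≠ 0) :
    exp (harmonic k - eulerMascheroniConstant) ∈ Set.Ioo (k : ℝ) (k + 1) :=
  ⟨(log_lt_iff_lt_exp (by positivity)).1 (log_lt_harmonic_sub_eulerMascheroniConstant hk),
    (lt_log_iff_exp_lt (by positivity)).1 (harmonic_sub_eulerMascheroniConstant_lt_log_succ k)⟩

lemma natCeil_one_sub_div_self {α : ℝ} {k : ℕ} (h : α⁻¹ ∈ Set.Ioc (k : ℝ) (k + 1)) :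
    ⌈(1 - α) / α⌉₊ = k := by
  have hα : α ≠ 0 := by
    rintro rfl
    exact (Nat.cast_nonneg k).not_gt (by simpa using h.1)
  have hceil : ⌈α⁻¹⌉₊ = k + 1 := by
    rw [Nat.ceil_eq_iff k.succ_ne_zero]
    exact_mod_cast h
  rw [sub_div, div_self hα, one_div, Nat.ceil_sub_one, hceil, Nat.add_sub_cancel]

lemma sum_Icc_natCeil_sub_log_eq {α : ℝ} {k : ℕ} (h : α⁻¹ ∈ Set.Ioc (k : ℝ) (k + 1)) :
    ∑ i ∈ Icc 1 ⌈(1 - α) / α⌉₊, (1 : ℝ) / i - log (1 / α) = harmonic k + log α := by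
  rw [natCeil_one_sub_div_self h, sum_Icc_one_div_eq_harmonic, one_div, log_inv, sub_neg_eq_add]

noncomputable def specialAlpha (k : ℕ) : ℝ := exp (eulerMascheroniConstant - harmonic k)

lemma specialAlpha_inv_mem_Ioc {k : ℕ} (hk : k ≠ 0) :
    (specialAlpha k)⁻¹ ∈ Set.Ioc (k : ℝ) (k + 1) := by
  rw [specialAlpha, ← exp_neg, neg_sub]
  exact Set.Ioo_subset_Ioc_self (exp_harmonic_sub_eulerMascheroniConstant_mem_Ioo hk)

lemma specialAlpha_mem_Ioo {k : ℕ} (hk : k ≠ 0) : specialAlpha k ∈ Set.Ioo 0 1 := by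
  refine ⟨exp_pos _, ?_⟩
  rw [specialAlpha, exp_lt_one_iff]
  linarith [log_lt_harmonic_sub_eulerMascheroniConstant hk, log_natCast_nonneg k]

lemma sum_Icc_natCeil_sub_log_specialAlpha {k : ℕ} (hk : k ≠ 0) :
    letI α := specialAlpha k
    ∑ i ∈ Icc 1 ⌈(1 - α) / α⌉₊, (1 : ℝ) / i - log (1 / α) = eulerMascheroniConstant := by
  rw [sum_Icc_natCeil_sub_log_eq (specialAlpha_inv_mem_Ioc hk), specialAlpha, log_exp]
  ring

lemma specialAlpha_succ_injective : Function.Injective fun n : ℕ => specialAlpha (n + 1) := by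
  intro m n hmn
  have hm := natCeil_one_sub_div_self (specialAlpha_inv_mem_Ioc m.add_one_ne_zero)
  have hn := natCeil_one_sub_div_self (specialAlpha_inv_mem_Ioc n.add_one_ne_zero)
  simp only at hmn
  rw [hmn, hn] at hm
  omega

theorem A_eq_gamma_for_special_alpha :
    (∀ k : ℕ, 0 < k →
      Real.exp (Real.eulerMascheroniConstant - ∑ i ∈ Finset.Icc 1 k, (1 : ℝ) / i)
        ∈ Set.Ioo (0 : ℝ) 1 ∧
      (letI α := Real.exp (Real.eulerMascheroniConstant - ∑ i ∈ Finset.Icc 1 k, (1 : ℝ) / i)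
       (∑ i ∈ Finset.Icc 1 ⌈(1 - α) / α⌉₊, (1 : ℝ) / i) - Real.log (1 / α) =
        Real.eulerMascheroniConstant)) ∧
    {α : ℝ | α ∈ Set.Ioo (0 : ℝ) 1 ∧
        (∑ i ∈ Finset.Icc 1 ⌈(1 - α) / α⌉₊, (1 : ℝ) / i) - Real.log (1 / α) =
          Real.eulerMascheroniConstant}.Infinite := by
  refine ⟨fun k hk => ?_, Set.infinite_of_injective_forall_mem specialAlpha_succ_injective
    fun n => ⟨specialAlpha_mem_Ioo n.add_one_ne_zero,
      sum_Icc_natCeil_sub_log_specialAlpha n.add_one_ne_zero⟩⟩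
  rw [sum_Icc_one_div_eq_harmonic]
  exact ⟨specialAlpha_mem_Ioo hk.ne', sum_Icc_natCeil_sub_log_specialAlpha hk.ne'⟩
end

section
/- The integral over α ∈ (0,1) of A(α) = ∑_{i=1}^{⌈(1−α)/α⌉} 1/i − ln(1/α) equals ζ(2) − 1 = π²/6 − 1. -/
/-! For `α > 0` and `i ≥ 1` we have `i ≤ ⌈(1 - α)/α⌉₊ ↔ α < 1/i`, so the harmonic sum in
`A(α)` is the layer-cake sum `∑_{i ≥ 1} (1/i) · 𝟙[α < 1/i]`. Integrating termwise over `(0, 1)`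
gives `∑ 1/i² = ζ(2) = π²/6`, while `∫₀¹ log (1/α) dα = 1`. -/

open MeasureTheory Set Real

lemma le_ceil_one_sub_div_iff {K : Type*} [Field K] [LinearOrder K] [IsStrictOrderedRing K]
    [FloorSemiring K] {α : K} (hα : 0 < α) {i : ℕ} (hi : 1 ≤ i) :
    i ≤ ⌈(1 - α) / α⌉₊ ↔ α < 1 / i := by
  obtain ⟨j, rfl⟩ := Nat.exists_eq_add_of_le' hi
  rw [Nat.add_one_le_iff, Nat.lt_ceil, lt_div_iff₀ hα, lt_div_iff₀ (by positivity)]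
  push_cast
  constructor <;> intro h <;> linarith

-- vanishes for `i = 0`, as `1 / 0 = 0`
noncomputable def harmonicLayer (i : ℕ) : ℝ → ℝ :=
  (Ioo 0 (1 / i : ℝ)).indicator fun _ => 1 / i

lemma harmonicLayer_nonneg (i : ℕ) (α : ℝ) : 0 ≤ harmonicLayer i α :=
  indicator_nonneg (fun _ _ => by positivity) α

lemma sum_Icc_ceil_eq_tsum_harmonicLayer {α : ℝ} (hα : 0 < α) :
    ∑ i ∈ Finset.Icc 1 ⌈(1 - α) / α⌉₊, (1 : ℝ) / i = ∑' i, harmonicLayer i α := by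
  rw [sum_eq_tsum_indicator]
  refine tsum_congr fun i => ?_
  rcases Nat.eq_zero_or_pos i with rfl | hi
  · simp [harmonicLayer]
  replace hi : 1 ≤ i := hi
  have hmem : i ∈ Finset.Icc 1 ⌈(1 - α) / α⌉₊ ↔ α ∈ Ioo 0 (1 / i : ℝ) := by
    simp only [Finset.mem_Icc, mem_Ioo, hα, true_and, hi, le_ceil_one_sub_div_iff hα hi]
  simp only [harmonicLayer, indicator_apply, Finset.mem_coe, hmem]

lemma integrable_harmonicLayer (i : ℕ) : Integrable (harmonicLayer i) :=
  (integrable_indicator_iff measurableSet_Ioo).2 (integrableOn_const (by simp))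

lemma setIntegral_Ioo_zero_one_harmonicLayer (i : ℕ) :
    ∫ α in Ioo 0 1, harmonicLayer i α = 1 / (i : ℝ) ^ 2 := by
  have hsub : Ioo 0 (1 / i : ℝ) ⊆ Ioo 0 1 :=
    Ioo_subset_Ioo_right (by simpa only [one_div] using Nat.cast_inv_le_one i)
  rw [harmonicLayer, setIntegral_indicator measurableSet_Ioo, inter_eq_right.2 hsub,
    setIntegral_const, measureReal_def, volume_Ioo, sub_zero,
    ENNReal.toReal_ofReal (by positivity), smul_eq_mul]
  ring

lemma setIntegral_Ioo_zero_one_tsum_harmonicLayer :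
    ∫ α in Ioo 0 1, ∑' i, harmonicLayer i α = π ^ 2 / 6 := by
  have hnorm (i : ℕ) : ∫ α in Ioo 0 1, ‖harmonicLayer i α‖ = 1 / (i : ℝ) ^ 2 := by
    simp only [norm_of_nonneg (harmonicLayer_nonneg i _), setIntegral_Ioo_zero_one_harmonicLayer]
  have hsum := hasSum_integral_of_summable_integral_norm
    (fun i => (integrable_harmonicLayer i).restrict (s := Ioo 0 1))
    (by simpa only [hnorm] using hasSum_zeta_two.summable)
  simp only [setIntegral_Ioo_zero_one_harmonicLayer] at hsum
  exact hsum.unique hasSum_zeta_two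

lemma integrableOn_log_one_div_Ioo_zero_one : IntegrableOn (fun α => log (1 / α)) (Ioo 0 1) := by
  simp only [one_div, log_inv]
  exact (intervalIntegral.intervalIntegrable_log' (a := 0) (b := 1)).1.neg.mono_set
    Ioo_subset_Ioc_self

lemma setIntegral_Ioo_zero_one_log_one_div : ∫ α in Ioo 0 1, log (1 / α) = 1 := by
  simp only [one_div, log_inv, integral_neg]
  rw [← integral_Ioc_eq_integral_Ioo, ← intervalIntegral.integral_of_le zero_le_one,
    integral_log]
  simp

theorem integral_A_eq_zeta_two_sub_one :
    ∫ α in Set.Ioo (0 : ℝ) 1,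
        ((∑ i ∈ Finset.Icc 1 ⌈(1 - α) / α⌉₊, (1 : ℝ) / i) - Real.log (1 / α)) =
      Real.pi ^ 2 / 6 - 1 := by
  have hH : ∫ α in Ioo (0 : ℝ) 1, ∑ i ∈ Finset.Icc 1 ⌈(1 - α) / α⌉₊, (1 : ℝ) / i =
      π ^ 2 / 6 := by
    rw [setIntegral_congr_fun measurableSet_Ioo
      fun α hα => sum_Icc_ceil_eq_tsum_harmonicLayer hα.1]
    exact setIntegral_Ioo_zero_one_tsum_harmonicLayer
  -- a non-integrable function would have Bochner integral `0`
  have hHint : IntegrableOn (fun α => ∑ i ∈ Finset.Icc 1 ⌈(1 - α) / α⌉₊, (1 : ℝ) / i)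
      (Ioo (0 : ℝ) 1) :=
    Integrable.of_integral_ne_zero (by rw [hH]; positivity)
  rw [integral_sub hHint integrableOn_log_one_div_Ioo_zero_one, hH,
    setIntegral_Ioo_zero_one_log_one_div]
end
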